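/- Let M ∈ ℕ, let 𝒢 = (G_1, …, G_G) be a partition of Fin M into G nonempty pairwise disjoint groups whose union is Fin M, and let v : Finset (Fin M) → ℝ be separable over 𝒢. Then for every i = 1, …, G, post-grouped Shapley equals groupShapley: ∑_{j ∈ G_i} φ_j(v) = φ_{G_i}. (groupShapley equivalence, Theorem 2.2.) -/

import Mathlib

open Finset

/-- The feature-wise Shapley value of feature `j` for contribution function `v`. -/
noncomputable def shapley {M : ℕ} (v : Finset (Fin M) → ℝ) (j : Fin M) : ℝ :=
  ∑ S ∈ (Finset.univ.erase j).powerset,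
    ((S.card.factorial * (M - S.card - 1).factorial : ℕ) : ℝ) / (M.factorial : ℕ) *
      (v (insert j S) - v S)

/-- The groupShapley value of group `G i` for contribution function `v` and
partition `G` of the features into `Gn` groups. -/
noncomputable def groupShapley {M Gn : ℕ} (G : Fin Gn → Finset (Fin M))
    (v : Finset (Fin M) → ℝ) (i : Fin Gn) : ℝ :=
  ∑ T ∈ (Finset.univ.erase i).powerset,
    ((T.card.factorial * (Gn - T.card - 1).factorial : ℕ) : ℝ) / (Gn.factorial : ℕ) *
      (v (T.biUnion G ∪ G i) - v (T.biUnion G))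

/-! Separability localises both sides to the component `w i` of the group. For `j ∈ G i` the
marginal contributions of `v` are those of `u S = w i (S ∩ G i)`, a game in which every feature
outside `G i` is a null player, so efficiency gives `∑ j ∈ G i, φ_j v = u univ - u ∅ =
w i (G i) - w i ∅`. The groupShapley value is the Shapley value of the quotient game
`T ↦ v (⋃ k ∈ T, G k)`, in which the marginal contribution of `i` is always
`w i (G i) - w i ∅`; as the Shapley weights sum to one, that constant is its value. -/

open scoped Nat

noncomputable def shapleyWeight (M s : ℕ) : ℝ :=
  ((s ! * (M - s - 1)! : ℕ) : ℝ) / (M ! : ℕ)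

theorem card_mul_shapleyWeight_pred {M s : ℕ} (hs₀ : 0 < s) (hsM : s ≤ M) :
    (s : ℝ) * shapleyWeight M (s - 1) = ((M.choose s : ℕ) : ℝ)⁻¹ := by
  have hfac : (s : ℝ) * ((s - 1)! : ℕ) = (s ! : ℕ) := by
    exact_mod_cast Nat.mul_factorial_pred hs₀.ne'
  rw [Nat.cast_choose ℝ hsM, inv_div, shapleyWeight, show M - (s - 1) - 1 = M - s by omega,
    Nat.cast_mul, ← mul_div_assoc, ← mul_assoc, hfac]

theorem sub_mul_shapleyWeight {M s : ℕ} (hsM : s < M) :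
    ((M - s : ℕ) : ℝ) * shapleyWeight M s = ((M.choose s : ℕ) : ℝ)⁻¹ := by
  have hfac : ((M - s : ℕ) : ℝ) * ((M - s - 1)! : ℕ) = ((M - s)! : ℕ) := by
    exact_mod_cast Nat.mul_factorial_pred (Nat.sub_ne_zero_of_lt hsM)
  rw [Nat.cast_choose ℝ hsM.le, inv_div, shapleyWeight, Nat.cast_mul, ← mul_div_assoc,
    mul_left_comm, hfac]

theorem card_mul_shapleyWeight_pred_sub {M s : ℕ} (hsM : s ≤ M) :
    (s : ℝ) * shapleyWeight M (s - 1) - ((M - s : ℕ) : ℝ) * shapleyWeight M s =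
      (if s = M then 1 else 0) - (if s = 0 then 1 else 0) := by
  rcases Nat.eq_zero_or_pos s with rfl | hs₀ <;> rcases hsM.eq_or_lt with rfl | hlt
  · simp
  · simpa [hlt.ne] using sub_mul_shapleyWeight hlt
  · simp [card_mul_shapleyWeight_pred hs₀ le_rfl, hs₀.ne']
  · simp [card_mul_shapleyWeight_pred hs₀ hsM, sub_mul_shapleyWeight hlt, hlt.ne, hs₀.ne']

section

variable {M : ℕ}

theorem shapley_eq_sum_univ (u : Finset (Fin M) → ℝ) (j : Fin M) :
    shapley u j = ∑ T, if j ∈ T then shapleyWeight M (#T - 1) * u T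
      else -(shapleyWeight M #T * u T) := by
  have h := sum_powerset_insert (notMem_erase j univ)
    (fun T => if j ∈ T then shapleyWeight M (#T - 1) * u T else -(shapleyWeight M #T * u T))
  rw [insert_erase (mem_univ j), powerset_univ] at h
  rw [h, ← sum_add_distrib, shapley]
  refine sum_congr rfl fun S hS => ?_
  have hjS : j ∉ S := fun hj => notMem_erase j univ (mem_powerset.mp hS hj)
  simp only [hjS, mem_insert_self, if_true, if_false, card_insert_of_notMem hjS,
    Nat.add_sub_cancel]
  rw [shapleyWeight]
  ring

theorem sum_shapley (u : Finset (Fin M) → ℝ) : ∑ j, shapley u j = u univ - u ∅ := by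
  have hcoeff (T : Finset (Fin M)) :
      (∑ j, if j ∈ T then shapleyWeight M (#T - 1) * u T else -(shapleyWeight M #T * u T)) =
        ((if T = univ then 1 else 0) - (if T = ∅ then 1 else 0)) * u T := by
    have hT : #T = M ↔ T = univ := by rw [← card_eq_iff_eq_univ, Fintype.card_fin]
    have h := card_mul_shapleyWeight_pred_sub (M := M) (s := #T) (by simpa using card_le_univ T)
    simp only [hT, card_eq_zero] at h
    rw [← h, sum_ite, filter_mem_eq_inter, univ_inter, filter_notMem_eq_sdiff, sum_const,
      sum_const, card_univ_sdiff, Fintype.card_fin, nsmul_eq_mul, nsmul_eq_mul]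
    ring
  simp_rw [shapley_eq_sum_univ u]
  rw [sum_comm]
  simp_rw [hcoeff, sub_mul, sum_sub_distrib, ite_mul, one_mul, zero_mul, sum_ite_eq']
  simp

variable (j : Fin M) {u v : Finset (Fin M) → ℝ}

theorem shapley_congr (h : ∀ S, j ∉ S → v (insert j S) - v S = u (insert j S) - u S) :
    shapley v j = shapley u j :=
  sum_congr rfl fun S hS => by
    rw [h S fun hj => notMem_erase j univ (mem_powerset.mp hS hj)]

theorem shapley_eq_zero_of_null (h : ∀ S, u (insert j S) = u S) : shapley u j = 0 :=
  sum_eq_zero fun S _ => by rw [h, sub_self, mul_zero]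

theorem shapley_eq_of_sub_eq_const {c : ℝ} (h : ∀ S, j ∉ S → v (insert j S) - v S = c) :
    shapley v j = c := by
  set e : Finset (Fin M) → ℝ := fun S => if j ∈ S then c else 0
  have he : shapley v j = shapley e j :=
    shapley_congr j fun S hS => by simp [e, h S hS, hS]
  have hnull (k : Fin M) (hk : k ≠ j) : shapley e k = 0 :=
    shapley_eq_zero_of_null k fun S => by simp [e, Ne.symm hk]
  rw [he, ← Fintype.sum_eq_single j hnull, sum_shapley]
  simp [e]

theorem sum_shapley_comp_inter (f : Finset (Fin M) → ℝ) (A : Finset (Fin M)) :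
    ∑ j ∈ A, shapley (fun S => f (S ∩ A)) j = f A - f ∅ := by
  rw [sum_subset (subset_univ A) fun k _ hk =>
      shapley_eq_zero_of_null k fun S => by rw [insert_inter_of_notMem hk],
    sum_shapley, univ_inter, empty_inter]

end

theorem sum_sub_sum_eq_of_inter_eq {ι α β : Type*} [Fintype ι] [DecidableEq α]
    [AddCommGroup β]
    (w : ι → Finset α → β) (G : ι → Finset α) {A B : Finset α} {i : ι}
    (h : ∀ k ≠ i, A ∩ G k = B ∩ G k) :
    ∑ k, w k (A ∩ G k) - ∑ k, w k (B ∩ G k) = w i (A ∩ G i) - w i (B ∩ G i) := by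
  rw [← sum_sub_distrib, Fintype.sum_eq_single i fun k hk => by rw [h k hk, sub_self]]

theorem groupShapley_eq_shapley_biUnion {M Gn : ℕ} (G : Fin Gn → Finset (Fin M))
    (v : Finset (Fin M) → ℝ) (i : Fin Gn) :
    groupShapley G v i = shapley (fun T => v (T.biUnion G)) i := by
  simp only [groupShapley, shapley, biUnion_insert, union_comm (G i)]

theorem postgrouped_eq_groupShapley_general
    (M Gn : ℕ) (G : Fin Gn → Finset (Fin M))
    (hdisj : ∀ i j : Fin Gn, i ≠ j → Disjoint (G i) (G j))
    (v : Finset (Fin M) → ℝ)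
    (hsep : ∃ w : Fin Gn → Finset (Fin M) → ℝ,
      ∀ S : Finset (Fin M), v S = ∑ i, w i (S ∩ G i))
    (i : Fin Gn) :
    ∑ j ∈ G i, shapley v j = groupShapley G v i := by
  obtain ⟨w, hw⟩ := hsep
  have hfeature : ∀ j ∈ G i, shapley v j = shapley (fun S => w i (S ∩ G i)) j :=
    fun j hj => shapley_congr j fun S _ => by
      rw [hw, hw]
      exact sum_sub_sum_eq_of_inter_eq w G fun k hk =>
        insert_inter_of_notMem (disjoint_left.mp (hdisj i k hk.symm) hj)
  have hgroup : ∀ T : Finset (Fin Gn), i ∉ T →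
      v ((insert i T).biUnion G) - v (T.biUnion G) = w i (G i) - w i ∅ := fun T hT => by
    have hTi : T.biUnion G ∩ G i = ∅ := disjoint_iff_inter_eq_empty.mp <|
      (disjoint_biUnion_left _ _ _).mpr fun k hk => hdisj k i (ne_of_mem_of_not_mem hk hT)
    rw [hw, hw, biUnion_insert, sum_sub_sum_eq_of_inter_eq w G fun k hk => ?_]
    · rw [union_inter_distrib_right, inter_self, hTi, union_empty]
    · rw [union_inter_distrib_right, disjoint_iff_inter_eq_empty.mp (hdisj i k hk.symm),
        empty_union]
  rw [sum_congr rfl hfeature, sum_shapley_comp_inter, groupShapley_eq_shapley_biUnion,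
    shapley_eq_of_sub_eq_const i hgroup]

/-- groupShapley equivalence (Theorem 2.2): if `v` is separable over the partition `G`,
then post-grouped Shapley equals groupShapley for every group. -/
theorem postgrouped_eq_groupShapley
    (M Gn : ℕ) (G : Fin Gn → Finset (Fin M))
    (hne : ∀ i, (G i).Nonempty)
    (hdisj : ∀ i j : Fin Gn, i ≠ j → Disjoint (G i) (G j))
    (hcover : Finset.univ.biUnion G = (Finset.univ : Finset (Fin M)))
    (v : Finset (Fin M) → ℝ)
    (hsep : ∃ w : Fin Gn → Finset (Fin M) → ℝ,
      ∀ S : Finset (Fin M), v S = ∑ i, w i (S ∩ G i))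
    (i : Fin Gn) :
    ∑ j ∈ G i, shapley v j = groupShapley G v i :=
  postgrouped_eq_groupShapley_general M Gn G hdisj v hsep i
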